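/- For closed sets P, Q ⊆ 2^ω, the Cantor-Bendixson derivative of P ⊗ Q satisfies D(P ⊗ Q) = (D(P) ⊗ Q) ∪ (P ⊗ D(Q)). -/

import Mathlib

open Set Topology Filter

abbrev Cantor : Type := ℕ → Bool

def join (X Y : Cantor) : Cantor := fun n => if n % 2 = 0 then X (n / 2) else Y (n / 2)

def IsolatedIn {α : Type*} [TopologicalSpace α] (x : α) (S : Set α) : Prop :=
  ∃ U : Set α, IsOpen U ∧ U ∩ S = {x}

def cbDeriv {α : Type*} [TopologicalSpace α] (S : Set α) : Set α :=
  {x ∈ S | x ∈ closure (S \ {x})}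

noncomputable def cbIter {X : Type*} [TopologicalSpace X] (P : Set X) (α : Ordinal) : Set X :=
  Ordinal.limitRecOn α P (fun _ S => cbDeriv S) (fun o _ ih => ⋂ β : {β // β < o}, ih β.1 β.2)

/-
Interleaving `(X, Y) ↦ X ⊕ Y` is a homeomorphism `2^ω × 2^ω ≃ 2^ω` carrying `P × Q` onto `P ⊗ Q`,
and homeomorphisms commute with the Cantor–Bendixson derivative. So it suffices to compute the
derivative of a product: `(x, y)` is isolated in `P × Q` iff `x` is isolated in `P` and `y` is
isolated in `Q`, because `𝓝[P × Q] (x, y) = 𝓝[P] x ×ˢ 𝓝[Q] y` and `{(x, y)} = {x} ×ˢ {y}`.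
-/

section CantorBendixson

variable {α β : Type*} [TopologicalSpace α] [TopologicalSpace β]

theorem mem_cbDeriv_iff {S : Set α} {x : α} : x ∈ cbDeriv S ↔ x ∈ S ∧ {x} ∉ 𝓝[S] x := by
  simp only [cbDeriv, mem_sep_iff, mem_closure_ne_iff_frequently_within, Filter.Frequently,
    mem_nhdsWithin_iff_eventually, eventually_nhdsWithin_iff, mem_compl_iff, mem_singleton_iff]
  refine and_congr_right fun _ => not_congr ⟨fun h => ?_, fun h => ?_⟩ <;>
    filter_upwards [h] with y hy <;> tauto

theorem cbDeriv_preimage_homeomorph (e : α ≃ₜ β) (T : Set β) :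
    cbDeriv (e ⁻¹' T) = e ⁻¹' cbDeriv T := by
  ext x
  have hdiff : e ⁻¹' T \ {x} = e ⁻¹' (T \ {e x}) := by
    rw [preimage_sdiff, ← image_singleton, e.preimage_image]
  rw [cbDeriv, cbDeriv, mem_preimage, mem_sep_iff, mem_sep_iff, hdiff, ← e.preimage_closure,
    mem_preimage, mem_preimage]

theorem cbDeriv_image_homeomorph (e : α ≃ₜ β) (S : Set α) :
    cbDeriv (e '' S) = e '' cbDeriv S := by
  simp only [e.image_eq_preimage_symm, cbDeriv_preimage_homeomorph]

theorem cbDeriv_prod (P : Set α) (Q : Set β) :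
    cbDeriv (P ×ˢ Q) = cbDeriv P ×ˢ Q ∪ P ×ˢ cbDeriv Q := by
  ext ⟨x, y⟩
  simp only [mem_union, mem_prod, mem_cbDeriv_iff, nhdsWithin_prod_eq, ← singleton_prod_singleton]
  by_cases hxy : x ∈ P ∧ y ∈ Q
  · have := mem_closure_iff_nhdsWithin_neBot.1 (subset_closure hxy.1)
    have := mem_closure_iff_nhdsWithin_neBot.1 (subset_closure hxy.2)
    rw [prod_mem_prod_iff]
    tauto
  · tauto

end CantorBendixson

def joinHomeomorph : Cantor × Cantor ≃ₜ Cantor where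
  toFun p := join p.1 p.2
  invFun Z := (fun n => Z (2 * n), fun n => Z (2 * n + 1))
  left_inv p := by
    ext n
    · simp [_root_.join]
    · simp [_root_.join, show (2 * n + 1) / 2 = n by omega]
  right_inv Z := by
    funext n
    rcases Nat.even_or_odd' n with ⟨k, rfl | rfl⟩
    · simp [_root_.join]
    · simp [_root_.join, show (2 * k + 1) / 2 = k by omega]
  continuous_toFun := by
    refine continuous_pi fun n => ?_
    change Continuous fun p : Cantor × Cantor => if n % 2 = 0 then p.1 (n / 2) else p.2 (n / 2)
    split_ifs <;> fun_prop
  continuous_invFun := by fun_prop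

theorem setOf_join_eq_image (A B : Set Cantor) :
    {Z : Cantor | ∃ X ∈ A, ∃ Y ∈ B, Z = join X Y} = joinHomeomorph '' A ×ˢ B := by
  ext Z
  simp [joinHomeomorph, eq_comm]

theorem cbDeriv_otimes_general (P Q : Set Cantor) :
    cbDeriv {Z : Cantor | ∃ X ∈ P, ∃ Y ∈ Q, Z = join X Y}
      = {Z : Cantor | ∃ X ∈ cbDeriv P, ∃ Y ∈ Q, Z = join X Y}
        ∪ {Z : Cantor | ∃ X ∈ P, ∃ Y ∈ cbDeriv Q, Z = join X Y} := by
  simp only [setOf_join_eq_image, cbDeriv_image_homeomorph, cbDeriv_prod, image_union]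

/-- For closed `P, Q ⊆ 2^ω`, `D(P ⊗ Q) = (D(P) ⊗ Q) ∪ (P ⊗ D(Q))`. -/
theorem cbDeriv_otimes (P Q : Set Cantor) (hP : IsClosed P) (hQ : IsClosed Q) :
    cbDeriv {Z : Cantor | ∃ X ∈ P, ∃ Y ∈ Q, Z = join X Y}
      = {Z : Cantor | ∃ X ∈ cbDeriv P, ∃ Y ∈ Q, Z = join X Y}
        ∪ {Z : Cantor | ∃ X ∈ P, ∃ Y ∈ cbDeriv Q, Z = join X Y} :=
  cbDeriv_otimes_general P Q
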